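/- arXiv:1602.02869 — 4 statements merged into one kernel-verified Lean document; each statement's English description precedes it below -/
import Mathlib

section
/- Let Ω ⊂ ℝ^N (N ≥ 2) be a bounded open domain with C² boundary and α ∈ (0,1). If w is a continuous function on the closure of Ω which is a viscosity solution of (-Δ)^α_Ω w = 0 in Ω with w = 0 on ∂Ω, then w ≡ 0 in Ω. -/
open MeasureTheory Metric Set Filter Topology

noncomputable section

variable {N : ℕ}

/-- The distance from `x` to the complement of `Ω`, denoted `ρ(x)` in the paper. -/
def bdist (Ω : Set (EuclideanSpace ℝ (Fin N))) (x : EuclideanSpace ℝ (Fin N)) : ℝ :=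
  Metric.infDist x Ωᶜ

/-- A set `Ω ⊆ ℝ^N` has `C²` boundary: near each boundary point, `Ω` is the sublevel set of a
`C²` function with nonvanishing differential. -/
def HasC2Boundary (Ω : Set (EuclideanSpace ℝ (Fin N))) : Prop :=
  ∀ x ∈ frontier Ω, ∃ (U : Set (EuclideanSpace ℝ (Fin N))) (ψ : EuclideanSpace ℝ (Fin N) → ℝ),
    IsOpen U ∧ x ∈ U ∧ ContDiff ℝ 2 ψ ∧ (∀ y ∈ U, fderiv ℝ ψ y ≠ 0) ∧
    Ω ∩ U = {y ∈ U | ψ y < 0}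

/-- `L` is the principal value of the regional fractional Laplacian `(-Δ)^α_Ω u (x)`. -/
def IsRegionalFracLap (Ω : Set (EuclideanSpace ℝ (Fin N))) (α : ℝ)
    (u : EuclideanSpace ℝ (Fin N) → ℝ) (x : EuclideanSpace ℝ (Fin N)) (L : ℝ) : Prop :=
  Tendsto (fun ε : ℝ => ∫ y in Ω \ Metric.ball x ε, (u x - u y) / ‖x - y‖ ^ ((N : ℝ) + 2 * α))
    (𝓝[>] (0 : ℝ)) (𝓝 L)

/-- `L` is the principal value of the (full) fractional Laplacian `(-Δ)^α u (x)`. -/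
def IsFracLap (α : ℝ) (u : EuclideanSpace ℝ (Fin N) → ℝ)
    (x : EuclideanSpace ℝ (Fin N)) (L : ℝ) : Prop :=
  Tendsto (fun ε : ℝ => ∫ y in (Metric.ball x ε)ᶜ, (u x - u y) / ‖x - y‖ ^ ((N : ℝ) + 2 * α))
    (𝓝[>] (0 : ℝ)) (𝓝 L)

open Classical in
/-- The test-function modification `ũ`, equal to `φ` on `V` and to `u` elsewhere. -/
def patch (V : Set (EuclideanSpace ℝ (Fin N))) (φ u : EuclideanSpace ℝ (Fin N) → ℝ) :
    EuclideanSpace ℝ (Fin N) → ℝ :=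
  fun y => if y ∈ V then φ y else u y

/-- `u` satisfies `(-Δ)^α_Ω u + f(u) ≥ g` in `Ω` in the viscosity sense. -/
def ViscSuper (Ω : Set (EuclideanSpace ℝ (Fin N))) (α : ℝ) (f : ℝ → ℝ)
    (g u : EuclideanSpace ℝ (Fin N) → ℝ) : Prop :=
  ∀ x₀ ∈ Ω, ∀ V : Set (EuclideanSpace ℝ (Fin N)), IsOpen V → x₀ ∈ V → closure V ⊆ Ω →
    ∀ φ : EuclideanSpace ℝ (Fin N) → ℝ, ContDiffOn ℝ 2 φ (closure V) → φ x₀ = u x₀ →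
      (∀ y ∈ V, u x₀ - φ x₀ ≤ u y - φ y) →
      ∃ L : ℝ, IsRegionalFracLap Ω α (patch V φ u) x₀ L ∧ g x₀ ≤ L + f (u x₀)

/-- `u` satisfies `(-Δ)^α_Ω u + f(u) ≤ g` in `Ω` in the viscosity sense. -/
def ViscSub (Ω : Set (EuclideanSpace ℝ (Fin N))) (α : ℝ) (f : ℝ → ℝ)
    (g u : EuclideanSpace ℝ (Fin N) → ℝ) : Prop :=
  ∀ x₀ ∈ Ω, ∀ V : Set (EuclideanSpace ℝ (Fin N)), IsOpen V → x₀ ∈ V → closure V ⊆ Ω →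
    ∀ φ : EuclideanSpace ℝ (Fin N) → ℝ, ContDiffOn ℝ 2 φ (closure V) → φ x₀ = u x₀ →
      (∀ y ∈ V, u y - φ y ≤ u x₀ - φ x₀) →
      ∃ L : ℝ, IsRegionalFracLap Ω α (patch V φ u) x₀ L ∧ L + f (u x₀) ≤ g x₀

/-- `u` satisfies `(-Δ)^α u + f(u) ≥ g` in `Ω` in the viscosity sense (full fractional
Laplacian). -/
def ViscSuperFrac (Ω : Set (EuclideanSpace ℝ (Fin N))) (α : ℝ) (f : ℝ → ℝ)
    (g u : EuclideanSpace ℝ (Fin N) → ℝ) : Prop :=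
  ∀ x₀ ∈ Ω, ∀ V : Set (EuclideanSpace ℝ (Fin N)), IsOpen V → x₀ ∈ V → closure V ⊆ Ω →
    ∀ φ : EuclideanSpace ℝ (Fin N) → ℝ, ContDiffOn ℝ 2 φ (closure V) → φ x₀ = u x₀ →
      (∀ y ∈ V, u x₀ - φ x₀ ≤ u y - φ y) →
      ∃ L : ℝ, IsFracLap α (patch V φ u) x₀ L ∧ g x₀ ≤ L + f (u x₀)

/-- `u` satisfies `(-Δ)^α u + f(u) ≤ g` in `Ω` in the viscosity sense (full fractional
Laplacian). -/
def ViscSubFrac (Ω : Set (EuclideanSpace ℝ (Fin N))) (α : ℝ) (f : ℝ → ℝ)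
    (g u : EuclideanSpace ℝ (Fin N) → ℝ) : Prop :=
  ∀ x₀ ∈ Ω, ∀ V : Set (EuclideanSpace ℝ (Fin N)), IsOpen V → x₀ ∈ V → closure V ⊆ Ω →
    ∀ φ : EuclideanSpace ℝ (Fin N) → ℝ, ContDiffOn ℝ 2 φ (closure V) → φ x₀ = u x₀ →
      (∀ y ∈ V, u y - φ y ≤ u x₀ - φ x₀) →
      ∃ L : ℝ, IsFracLap α (patch V φ u) x₀ L ∧ L + f (u x₀) ≤ g x₀

/-- `u(x) → +∞` as `x → ∂Ω` from inside `Ω`. -/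
def BlowsUp (Ω : Set (EuclideanSpace ℝ (Fin N))) (u : EuclideanSpace ℝ (Fin N) → ℝ) : Prop :=
  ∀ z ∈ frontier Ω, Tendsto u (𝓝[Ω] z) atTop

/-- A boundary blow-up viscosity solution of `(-Δ)^α_Ω u + f(u) = 0` in `Ω`,
`u = +∞` on `∂Ω`. -/
def IsBBSolution (Ω : Set (EuclideanSpace ℝ (Fin N))) (α : ℝ) (f : ℝ → ℝ)
    (u : EuclideanSpace ℝ (Fin N) → ℝ) : Prop :=
  ContinuousOn u Ω ∧ IntegrableOn u Ω volume ∧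
  ViscSuper Ω α f (fun _ => 0) u ∧ ViscSub Ω α f (fun _ => 0) u ∧ BlowsUp Ω u

/-- A viscosity solution of `(-Δ)^α_Ω u + f(u) = g` in `Ω`, `u = c` on `∂Ω` (the constant
boundary value being attained continuously). -/
def IsDirichletSol (Ω : Set (EuclideanSpace ℝ (Fin N))) (α : ℝ) (f : ℝ → ℝ)
    (g : EuclideanSpace ℝ (Fin N) → ℝ) (c : ℝ) (u : EuclideanSpace ℝ (Fin N) → ℝ) : Prop :=
  ContinuousOn u Ω ∧ IntegrableOn u Ω volume ∧
  ViscSuper Ω α f g u ∧ ViscSub Ω α f g u ∧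
  ∀ z ∈ frontier Ω, Tendsto u (𝓝[Ω] z) (𝓝 c)

/-- The `C^t = C^{t₀, t - t₀}` Hölder norm of `w` on `s` is at most `M` (for `t` a positive
noninteger with integer part `t₀ = ⌊t⌋`). -/
def CNormLE (t : ℝ) (w : EuclideanSpace ℝ (Fin N) → ℝ)
    (s : Set (EuclideanSpace ℝ (Fin N))) (M : ℝ) : Prop :=
  ContDiffOn ℝ (⌊t⌋₊ : ℕ) w s ∧
  (∀ k : ℕ, k ≤ ⌊t⌋₊ → ∀ x ∈ s, ‖iteratedFDerivWithin ℝ k w s x‖ ≤ M) ∧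
  ∀ x ∈ s, ∀ y ∈ s,
    ‖iteratedFDerivWithin ℝ ⌊t⌋₊ w s x - iteratedFDerivWithin ℝ ⌊t⌋₊ w s y‖ ≤
      M * ‖x - y‖ ^ (t - (⌊t⌋₊ : ℝ))

/-- `w` is locally `C^t` in the open set `Ω`. -/
def LocallyCNorm (t : ℝ) (w : EuclideanSpace ℝ (Fin N) → ℝ)
    (Ω : Set (EuclideanSpace ℝ (Fin N))) : Prop :=
  ∀ x ∈ Ω, ∃ r > 0, Metric.ball x r ⊆ Ω ∧ ∃ M : ℝ, CNormLE t w (Metric.ball x r) M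

/-- `t` is not an integer. -/
def NotNatural (t : ℝ) : Prop := ¬ ∃ n : ℕ, t = n

/-!
A weak maximum principle. If `w > 0` somewhere, it attains a positive maximum `M` at an interior
point `x₀`. Testing the subsolution inequality at `x₀` with the constant `φ ≡ M` on a small ball
gives a regional Laplacian `L ≤ 0`; but its integrand `(M - ũ(y)) / |x₀ - y|^{N+2α}` is
nonnegative on `Ω` and bounded below by a positive constant near a boundary point, where
`w < M / 2`, so `L > 0`. Applied to `-w`, which is a subsolution because `w` is a
supersolution, this gives `w = 0`.
-/

section Kernel

variable {E : Type*} [NormedAddCommGroup E] [MeasurableSpace E] [BorelSpace E] {μ : Measure E}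

lemma integrableOn_diff_ball_div_norm_rpow {Ω : Set E} (hΩm : MeasurableSet Ω) (hΩ : μ Ω ≠ ⊤)
    {u : E → ℝ} (hu : IntegrableOn u Ω μ) (x : E) {p : ℝ} (hp : 0 ≤ p) {ε : ℝ} (hε : 0 < ε) :
    IntegrableOn (fun y => (u x - u y) / ‖x - y‖ ^ p) (Ω \ ball x ε) μ := by
  have hfin : μ (Ω \ ball x ε) ≠ ⊤ := ne_top_of_le_ne_top hΩ (measure_mono sdiff_subset)
  have hnum : IntegrableOn (fun y => u x - u y) (Ω \ ball x ε) μ :=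
    (integrableOn_const hfin).sub (hu.mono_set sdiff_subset)
  simp only [div_eq_mul_inv]
  refine hnum.mul_bdd (c := (ε ^ p)⁻¹) (Measurable.aestronglyMeasurable (by fun_prop)) ?_
  refine ae_restrict_of_forall_mem (hΩm.diff measurableSet_ball) fun y hy => ?_
  have hεy : ε ≤ ‖x - y‖ := by simpa [dist_eq_norm'] using hy.2
  rw [norm_inv, Real.norm_of_nonneg (by positivity)]
  exact inv_anti₀ (by positivity) (Real.rpow_le_rpow hε.le hεy hp)

lemma setIntegral_diff_ball_le_of_tendsto {Ω : Set E} (hΩm : MeasurableSet Ω) {f : E → ℝ}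
    (hf : ∀ y ∈ Ω, 0 ≤ f y) {x : E} (hint : ∀ ε > 0, IntegrableOn f (Ω \ ball x ε) μ) {L : ℝ}
    (hL : Tendsto (fun ε => ∫ y in Ω \ ball x ε, f y ∂μ) (𝓝[>] 0) (𝓝 L)) {r : ℝ} (hr : 0 < r) :
    ∫ y in Ω \ ball x r, f y ∂μ ≤ L := by
  refine ge_of_tendsto hL ?_
  filter_upwards [Ioo_mem_nhdsGT hr] with ε hε
  refine setIntegral_mono_set (hint ε hε.1) ?_ ?_
  · exact ae_restrict_of_forall_mem (hΩm.diff measurableSet_ball) fun y hy => hf y hy.1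
  · exact (sdiff_subset_sdiff_right (ball_subset_ball hε.2.le)).eventuallyLE

end Kernel

lemma ViscSuper.viscSub_neg {Ω : Set (EuclideanSpace ℝ (Fin N))} {α : ℝ}
    {w : EuclideanSpace ℝ (Fin N) → ℝ} (h : ViscSuper Ω α (fun _ => 0) (fun _ => 0) w) :
    ViscSub Ω α (fun _ => 0) (fun _ => 0) (-w) := by
  intro x₀ hx₀ V hVo hx₀V hclV φ hφ hφx₀ hmax
  obtain ⟨L, hL, hLnonneg⟩ := h x₀ hx₀ V hVo hx₀V hclV (-φ) hφ.neg
    (by simp [hφx₀]) (fun y hy => by have := hmax y hy; simp only [Pi.neg_apply] at *; linarith)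
  refine ⟨-L, hL.neg.congr fun ε => ?_, by simpa using hLnonneg⟩
  have hpatch : patch V φ (-w) = -patch V (-φ) w := by
    ext y; by_cases hy : y ∈ V <;> simp [patch, hy]
  rw [← integral_neg, hpatch]
  simp only [Pi.neg_apply, ← neg_div, neg_sub_neg, neg_sub]

lemma integrableOn_patch {Ω V : Set (EuclideanSpace ℝ (Fin N))} (hΩ : MeasurableSet Ω)
    (hV : MeasurableSet V) {φ u : EuclideanSpace ℝ (Fin N) → ℝ} (hφ : IntegrableOn φ (Ω ∩ V))
    (hu : IntegrableOn u Ω) : IntegrableOn (patch V φ u) Ω := by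
  have hin : IntegrableOn (patch V φ u) (Ω ∩ V) :=
    hφ.congr_fun (fun y hy => by simp [patch, hy.2]) (hΩ.inter hV)
  have hout : IntegrableOn (patch V φ u) (Ω \ V) :=
    (hu.mono_set sdiff_subset).congr_fun (fun y hy => by simp [patch, hy.2]) (hΩ.diff hV)
  simpa only [inter_union_sdiff] using hin.union hout

lemma IsRegionalFracLap.pos {Ω : Set (EuclideanSpace ℝ (Fin N))} (hΩo : IsOpen Ω)
    (hΩb : Bornology.IsBounded Ω) {α : ℝ} (hα : 0 ≤ α) {u : EuclideanSpace ℝ (Fin N) → ℝ}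
    (hu : IntegrableOn u Ω) {x : EuclideanSpace ℝ (Fin N)} (hmax : ∀ y ∈ Ω, u y ≤ u x)
    {r : ℝ} (hr : 0 < r) {S : Set (EuclideanSpace ℝ (Fin N))} (hSo : IsOpen S)
    (hSne : S.Nonempty) (hSΩ : S ⊆ Ω \ ball x r) {η : ℝ} (hη : 0 < η)
    (hSη : ∀ y ∈ S, u y + η ≤ u x) {L : ℝ} (hL : IsRegionalFracLap Ω α u x L) : 0 < L := by
  set p : ℝ := N + 2 * α
  have hp : 0 ≤ p := by positivity
  set f := fun y => (u x - u y) / ‖x - y‖ ^ p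
  have hf : ∀ y ∈ Ω, 0 ≤ f y := fun y hy => div_nonneg (by linarith [hmax y hy]) (by positivity)
  have hΩfin : volume Ω ≠ ⊤ := hΩb.measure_lt_top.ne
  have hint : ∀ ε > 0, IntegrableOn f (Ω \ ball x ε) :=
    fun ε hε => integrableOn_diff_ball_div_norm_rpow hΩo.measurableSet hΩfin hu x hp hε
  obtain ⟨R, hR⟩ := hΩb.subset_closedBall x
  have hSdist : ∀ y ∈ S, r ≤ ‖x - y‖ ∧ ‖x - y‖ ≤ R := fun y hy =>
    ⟨by simpa [dist_eq_norm'] using (hSΩ hy).2, by simpa [dist_eq_norm'] using hR (hSΩ hy).1⟩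
  have hf_lower : ∀ y ∈ S, η / R ^ p ≤ f y := fun y hy =>
    div_le_div₀ (by linarith [hSη y hy]) (by linarith [hSη y hy])
      (Real.rpow_pos_of_pos (hr.trans_le (hSdist y hy).1) p)
      (Real.rpow_le_rpow (norm_nonneg _) (hSdist y hy).2 hp)
  obtain ⟨y₀, hy₀⟩ := hSne
  have hRpos : 0 < R := hr.trans_le ((hSdist y₀ hy₀).1.trans (hSdist y₀ hy₀).2)
  have hSfin : volume S ≠ ⊤ := ne_top_of_le_ne_top hΩfin (measure_mono (hSΩ.trans sdiff_subset))
  calc 0 < η / R ^ p * volume.real S :=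
        mul_pos (by positivity) (ENNReal.toReal_pos (hSo.measure_ne_zero _ ⟨y₀, hy₀⟩) hSfin)
    _ ≤ ∫ y in S, f y :=
        setIntegral_ge_of_const_le_real hSo.measurableSet hSfin hf_lower ((hint r hr).mono_set hSΩ)
    _ ≤ ∫ y in Ω \ ball x r, f y :=
        setIntegral_mono_set (hint r hr)
          (ae_restrict_of_forall_mem (hΩo.measurableSet.diff measurableSet_ball)
            fun y hy => hf y hy.1) hSΩ.eventuallyLE
    _ ≤ L := setIntegral_diff_ball_le_of_tendsto hΩo.measurableSet hf hint hL hr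

lemma exists_mem_pos_max_of_frontier_nonpos {X : Type*} [TopologicalSpace X] {Ω : Set X}
    (hΩo : IsOpen Ω) (hΩc : IsCompact (closure Ω)) {w : X → ℝ} (hw : ContinuousOn w (closure Ω))
    (hbdry : ∀ z ∈ frontier Ω, w z ≤ 0) {x : X} (hx : x ∈ Ω) (hwx : 0 < w x) :
    ∃ x₀ ∈ Ω, 0 < w x₀ ∧ ∀ y ∈ Ω, w y ≤ w x₀ := by
  obtain ⟨x₀, hx₀, hmax⟩ := hΩc.exists_isMaxOn ⟨x, subset_closure hx⟩ hw
  have hpos : 0 < w x₀ := hwx.trans_le (hmax (subset_closure hx))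
  have hx₀Ω : x₀ ∈ Ω := by
    by_contra hx₀Ω
    exact (hbdry x₀ (hΩo.frontier_eq ▸ ⟨hx₀, hx₀Ω⟩)).not_gt hpos
  exact ⟨x₀, hx₀Ω, hpos, fun y hy => hmax (subset_closure hy)⟩

lemma exists_ball_and_open_near_frontier {X : Type*} [MetricSpace X] {Ω : Set X}
    (hΩo : IsOpen Ω) {x₀ z : X} (hx₀ : x₀ ∈ Ω) (hz : z ∈ frontier Ω) {δ : ℝ} (hδ : 0 < δ) :
    ∃ r > 0, closure (ball x₀ r) ⊆ Ω ∧
      ∃ S, IsOpen S ∧ S.Nonempty ∧ S ⊆ (Ω ∩ ball z δ) \ ball x₀ r := by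
  have hd : 0 < dist x₀ z := dist_pos.mpr fun h => (hΩo.frontier_eq ▸ hz).2 (h ▸ hx₀)
  obtain ⟨r₀, hr₀, hr₀Ω⟩ := Metric.isOpen_iff.mp hΩo x₀ hx₀
  set r := min (r₀ / 2) (dist x₀ z / 2)
  set δ' := min δ (dist x₀ z / 2)
  refine ⟨r, by positivity, closure_ball_subset_closedBall.trans
    ((closedBall_subset_ball (by linarith [min_le_left (r₀ / 2) (dist x₀ z / 2)])).trans hr₀Ω),
    Ω ∩ ball z δ', hΩo.inter isOpen_ball, ?_, fun y hy => ?_⟩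
  · simpa [inter_comm] using mem_closure_iff.mp (frontier_subset_closure hz) _ isOpen_ball
      (mem_ball_self (lt_min hδ (half_pos hd)))
  · have hyz := mem_ball.mp hy.2
    refine ⟨⟨hy.1, hyz.trans_le (min_le_left _ _)⟩, fun hyx => ?_⟩
    linarith [dist_triangle x₀ y z, mem_ball'.mp hyx, min_le_right (r₀ / 2) (dist x₀ z / 2),
      min_le_right δ (dist x₀ z / 2)]

lemma ViscSub.nonpos (hN : 0 < N) {Ω : Set (EuclideanSpace ℝ (Fin N))} (hΩo : IsOpen Ω)
    (hΩb : Bornology.IsBounded Ω) {α : ℝ} (hα : 0 ≤ α) {w : EuclideanSpace ℝ (Fin N) → ℝ}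
    (hwc : ContinuousOn w (closure Ω)) (hwi : IntegrableOn w Ω)
    (hsub : ViscSub Ω α (fun _ => 0) (fun _ => 0) w) (hbdry : ∀ z ∈ frontier Ω, w z = 0)
    {x : EuclideanSpace ℝ (Fin N)} (hx : x ∈ Ω) : w x ≤ 0 := by
  by_contra! hwx
  obtain ⟨x₀, hx₀, hM, hmax⟩ := exists_mem_pos_max_of_frontier_nonpos hΩo
    hΩb.isCompact_closure hwc (fun z hz => (hbdry z hz).le) hx hwx
  set M := w x₀
  have : Nontrivial (EuclideanSpace ℝ (Fin N)) := by
    have : NeZero N := ⟨hN.ne'⟩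
    infer_instance
  obtain ⟨z, hz⟩ : (frontier Ω).Nonempty :=
    nonempty_frontier_iff.mpr ⟨⟨x, hx⟩, fun h => NormedSpace.unbounded_univ ℝ _ (h ▸ hΩb)⟩
  obtain ⟨δ, hδ, hδw⟩ := Metric.continuousWithinAt_iff.mp (hwc z (frontier_subset_closure hz))
    (M / 2) (by positivity)
  obtain ⟨r, hr, hclV, S, hSo, hSne, hS⟩ := exists_ball_and_open_near_frontier hΩo hx₀ hz hδ
  set u := patch (ball x₀ r) (fun _ => M) w
  obtain ⟨L, hL, hL0⟩ := hsub x₀ hx₀ (ball x₀ r) isOpen_ball (mem_ball_self hr) hclV (fun _ => M)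
    contDiffOn_const rfl fun y hy => by simpa using hmax y (hclV (subset_closure hy))
  have hux₀ : u x₀ = M := by simp [u, patch, hr]
  have hu_le : ∀ y ∈ Ω, u y ≤ u x₀ := fun y hy => by
    rw [hux₀]
    by_cases hyV : y ∈ ball x₀ r <;> simp [u, patch, hyV, hmax y hy]
  have hu_gap : ∀ y ∈ S, u y + M / 2 ≤ u x₀ := fun y hy => by
    have hwy := hδw (subset_closure (hS hy).1.1) (hS hy).1.2
    rw [hbdry z hz, Real.dist_0_eq_abs] at hwy
    rw [hux₀]
    simp only [u, patch, (hS hy).2, if_false]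
    linarith [(abs_lt.mp hwy).2]
  have hVint : IntegrableOn (fun _ => M) (Ω ∩ ball x₀ r) := integrableOn_const
    (ne_top_of_le_ne_top hΩb.measure_lt_top.ne (measure_mono inter_subset_left))
  have hLpos := hL.pos hΩo hΩb hα (integrableOn_patch hΩo.measurableSet measurableSet_ball hVint hwi)
    hu_le hr hSo hSne (fun y hy => ⟨(hS hy).1.1, (hS hy).2⟩) (half_pos hM) hu_gap
  simp only at hL0
  linarith

theorem statement12_general
    (N : ℕ) (hN : 2 ≤ N) (Ω : Set (EuclideanSpace ℝ (Fin N)))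
    (hΩo : IsOpen Ω) (hΩb : Bornology.IsBounded Ω)
    (α : ℝ) (hα1 : 0 < α)
    (w : EuclideanSpace ℝ (Fin N) → ℝ)
    (hwcont : ContinuousOn w (closure Ω)) (hwint : IntegrableOn w Ω volume)
    (hsuper : ViscSuper Ω α (fun _ => 0) (fun _ => 0) w)
    (hsub : ViscSub Ω α (fun _ => 0) (fun _ => 0) w)
    (hbdry : ∀ z ∈ frontier Ω, w z = 0) :
    ∀ x ∈ Ω, w x = 0 := by
  intro x hx
  have hN' : 0 < N := by omega
  have hle := hsub.nonpos hN' hΩo hΩb hα1.le hwcont hwint hbdry hx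
  have hge := hsuper.viscSub_neg.nonpos hN' hΩo hΩb hα1.le hwcont.neg hwint.neg
    (fun z hz => by simp [hbdry z hz]) hx
  simp only [Pi.neg_apply, neg_nonpos] at hge
  linarith

/-- Maximum principle: a continuous viscosity solution of
`(-Δ)^α_Ω w = 0` in `Ω` with `w = 0` on `∂Ω` vanishes identically in `Ω`. -/
theorem statement12
    (N : ℕ) (hN : 2 ≤ N) (Ω : Set (EuclideanSpace ℝ (Fin N)))
    (hΩo : IsOpen Ω) (hΩb : Bornology.IsBounded Ω) (hΩconn : IsConnected Ω)
    (hΩbd : HasC2Boundary Ω)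
    (α : ℝ) (hα1 : 0 < α) (hα2 : α < 1)
    (w : EuclideanSpace ℝ (Fin N) → ℝ)
    (hwcont : ContinuousOn w (closure Ω)) (hwint : IntegrableOn w Ω volume)
    (hsuper : ViscSuper Ω α (fun _ => 0) (fun _ => 0) w)
    (hsub : ViscSub Ω α (fun _ => 0) (fun _ => 0) w)
    (hbdry : ∀ z ∈ frontier Ω, w z = 0) :
    ∀ x ∈ Ω, w x = 0 :=
  statement12_general N hN Ω hΩo hΩb α hα1 w hwcont hwint hsuper hsub hbdry
end
end

section
/- Let Ω ⊂ ℝ^N (N ≥ 2) be a bounded open domain with C² boundary and α ∈ (0,1), and let φ(x) = ∫_{ℝ^N \ Ω} |x-y|^{-(N+2α)} dy for x ∈ Ω. Then there exists a constant C > 0 such that for all x₁, x₂ ∈ Ω, |φ(x₁) - φ(x₂)| ≤ C (ρ(x₁)^{-1-2α} + ρ(x₂)^{-1-2α}) |x₁ - x₂|; in particular, φ is locally Lipschitz (C^{0,1}) in Ω. -/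
open MeasureTheory Metric Set Filter Topology

noncomputable section

variable {N : ℕ}

open Module

/-! With `s = N + 2α`, the mean value theorem gives, for `y ∉ Ω`,
`| |x₁-y|^{-s} - |x₂-y|^{-s} | ≤ s |x₁-x₂| (|x₁-y|^{-s-1} + |x₂-y|^{-s-1})`.
Since `|x - y| ≥ ρ(x)` for `y ∉ Ω`, polar coordinates bound `∫_{ℝ^N \ Ω} |x-y|^{-s-1} dy` by
`∫_{|z| ≥ ρ(x)} |z|^{-s-1} dz = c ρ(x)^{N-s-1} = c ρ(x)^{-1-2α}`. Local Lipschitz continuity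
follows since `ρ ≥ ρ(x)/2` on `B(x, ρ(x)/2)`. -/

lemma abs_rpow_neg_sub_rpow_neg_le {s a b : ℝ} (hs : 0 ≤ s) (ha : 0 < a) (hb : 0 < b) :
    |a ^ (-s) - b ^ (-s)| ≤ s * (a ^ (-(s + 1)) + b ^ (-(s + 1))) * |a - b| := by
  wlog hab : a ≤ b generalizing a b
  · rw [abs_sub_comm, add_comm, abs_sub_comm a]
    exact this hb ha (le_of_not_ge hab)
  have hderiv : ∀ u ∈ Icc a b, HasDerivWithinAt (· ^ (-s)) (-s * u ^ (-s - 1)) (Icc a b) u :=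
    fun u hu ↦ (Real.hasDerivAt_rpow_const (Or.inl (ha.trans_le hu.1).ne')).hasDerivWithinAt
  have hbound : ∀ u ∈ Icc a b, ‖-s * u ^ (-s - 1)‖ ≤ s * a ^ (-(s + 1)) := fun u hu ↦ by
    rw [norm_mul, norm_neg, Real.norm_of_nonneg hs,
      Real.norm_of_nonneg (Real.rpow_nonneg (ha.le.trans hu.1) _), ← neg_add']
    exact mul_le_mul_of_nonneg_left (Real.rpow_le_rpow_of_nonpos ha hu.1 (by linarith)) hs
  have hmvt := (convex_Icc a b).norm_image_sub_le_of_norm_hasDerivWithin_le hderiv hbound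
    (left_mem_Icc.2 hab) (right_mem_Icc.2 hab)
  rw [Real.norm_eq_abs, Real.norm_eq_abs, abs_sub_comm, abs_sub_comm b] at hmvt
  refine hmvt.trans (mul_le_mul_of_nonneg_right ?_ (abs_nonneg _))
  exact mul_le_mul_of_nonneg_left (le_add_of_nonneg_right (Real.rpow_nonneg hb.le _)) hs

lemma abs_rpow_neg_norm_sub_sub_le {E : Type*} [SeminormedAddCommGroup E] {s : ℝ} (hs : 0 ≤ s)
    {x₁ x₂ y : E} (h₁ : 0 < ‖x₁ - y‖) (h₂ : 0 < ‖x₂ - y‖) :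
    |‖x₁ - y‖ ^ (-s) - ‖x₂ - y‖ ^ (-s)| ≤
      s * ‖x₁ - x₂‖ * (‖x₁ - y‖ ^ (-(s + 1)) + ‖x₂ - y‖ ^ (-(s + 1))) := by
  refine (abs_rpow_neg_sub_rpow_neg_le hs h₁ h₂).trans ?_
  rw [mul_right_comm]
  refine mul_le_mul_of_nonneg_right (mul_le_mul_of_nonneg_left ?_ hs) (by positivity)
  simpa using abs_norm_sub_norm_le (x₁ - y) (x₂ - y)

lemma eqOn_rpow_neg_norm_sub_indicator {E : Type*} [SeminormedAddCommGroup E] (s : ℝ) {t : Set E}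
    (x : E) :
    EqOn (fun y ↦ ‖x - y‖ ^ (-s)) (fun y ↦ (Ici (infDist x t)).indicator (· ^ (-s)) ‖y - x‖) t :=
  fun y hy ↦ by
    dsimp only
    rw [indicator_of_mem (mem_Ici.2 ((infDist_le_dist_of_mem hy).trans_eq (dist_eq_norm' x y))),
      norm_sub_rev]

lemma exists_ball_lipschitzOnWith_of_abs_sub_le {E : Type*} [SeminormedAddCommGroup E]
    {f : E → ℝ} {t : Set E} {C q : ℝ} (hC : 0 ≤ C) (hq : q ≤ 0)
    (hf : ∀ x₁ x₂, 0 < infDist x₁ t → 0 < infDist x₂ t →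
      |f x₁ - f x₂| ≤ C * (infDist x₁ t ^ q + infDist x₂ t ^ q) * ‖x₁ - x₂‖)
    {x : E} (hx : 0 < infDist x t) :
    ∃ r > 0, ball x r ⊆ tᶜ ∧ ∃ K : NNReal, LipschitzOnWith K f (ball x r) := by
  set r := infDist x t / 2 with hr_def
  have hr : 0 < r := half_pos hx
  have hrz : ∀ z ∈ ball x r, r ≤ infDist z t := fun z hz ↦ by
    linarith [infDist_le_infDist_add_dist (s := t) (x := x) (y := z), dist_comm x z,
      mem_ball.1 hz]
  refine ⟨r, hr, fun z hz hzt ↦ ?_, (C * (2 * r ^ q)).toNNReal, ?_⟩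
  · linarith [hrz z hz, infDist_zero_of_mem hzt]
  refine LipschitzOnWith.of_dist_le_mul fun z₁ hz₁ z₂ hz₂ ↦ ?_
  have hρ : ∀ z ∈ ball x r, infDist z t ^ q ≤ r ^ q := fun z hz ↦
    Real.rpow_le_rpow_of_nonpos hr (hrz z hz) hq
  rw [Real.coe_toNNReal _ (by positivity), Real.dist_eq, dist_eq_norm]
  refine (hf z₁ z₂ (hr.trans_le (hrz z₁ hz₁)) (hr.trans_le (hrz z₂ hz₂))).trans ?_
  gcongr
  linarith [hρ z₁ hz₁, hρ z₂ hz₂]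

section RadialTail

variable {E : Type*} [NormedAddCommGroup E] [NormedSpace ℝ E] [FiniteDimensional ℝ E]
  [MeasurableSpace E] [BorelSpace E] [Nontrivial E] (μ : Measure E) [μ.IsAddHaarMeasure]
  {s d : ℝ}

lemma pow_smul_indicator_rpow_neg {n : ℕ} (hn : 1 ≤ n) {y : ℝ} (hy : 0 < y) :
    y ^ (n - 1) • (Ici d).indicator (· ^ (-s)) y =
      (Ici d).indicator (· ^ ((n : ℝ) - 1 - s)) y := by
  by_cases hyd : y ∈ Ici d
  · rw [indicator_of_mem hyd, indicator_of_mem hyd, smul_eq_mul, ← Real.rpow_natCast,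
      ← Real.rpow_add hy, Nat.cast_sub hn, Nat.cast_one, ← sub_eq_add_neg]
  · simp [indicator_of_notMem hyd]

lemma integrable_indicator_rpow_neg_norm (hs : (finrank ℝ E : ℝ) < s) (hd : 0 < d) :
    Integrable (fun z : E ↦ (Ici d).indicator (· ^ (-s)) ‖z‖) μ := by
  rw [integrable_fun_norm_addHaar μ,
    integrableOn_congr_fun (fun y (hy : y ∈ Ioi 0) ↦ pow_smul_indicator_rpow_neg finrank_pos hy)
      measurableSet_Ioi]
  refine (integrable_indicator_iff measurableSet_Ici).2 ?_ |>.integrableOn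
  exact (integrableOn_Ici_iff_integrableOn_Ioi (by simp)).2
    (integrableOn_Ioi_rpow_of_lt (by linarith) hd)

lemma integral_indicator_rpow_neg_norm (hs : (finrank ℝ E : ℝ) < s) (hd : 0 < d) :
    ∫ z, (Ici d).indicator (· ^ (-s)) ‖z‖ ∂μ =
      finrank ℝ E * μ.real (ball 0 1) / (s - finrank ℝ E) * d ^ ((finrank ℝ E : ℝ) - s) := by
  rw [integral_fun_norm_addHaar μ,
    setIntegral_congr_fun measurableSet_Ioi
      (fun y (hy : y ∈ Ioi 0) ↦ pow_smul_indicator_rpow_neg finrank_pos hy),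
    setIntegral_indicator measurableSet_Ici,
    inter_eq_right.2 (Ici_subset_Ioi.2 hd), integral_Ici_eq_integral_Ioi,
    integral_Ioi_rpow_of_lt (by linarith) hd]
  rw [show (finrank ℝ E : ℝ) - 1 - s + 1 = finrank ℝ E - s by ring,
    show s - finrank ℝ E = -(finrank ℝ E - s) by ring, div_neg, nsmul_eq_mul, smul_eq_mul]
  ring

lemma integrableOn_rpow_neg_norm_sub (hs : (finrank ℝ E : ℝ) < s) {t : Set E}
    (ht : MeasurableSet t) {x : E} (hx : 0 < infDist x t) :
    IntegrableOn (fun y ↦ ‖x - y‖ ^ (-s)) t μ :=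
  ((integrable_indicator_rpow_neg_norm μ hs hx).comp_sub_right x).integrableOn.congr_fun
    (eqOn_rpow_neg_norm_sub_indicator s x).symm ht

lemma setIntegral_rpow_neg_norm_sub_le (hs : (finrank ℝ E : ℝ) < s) {t : Set E}
    (ht : MeasurableSet t) {x : E} (hx : 0 < infDist x t) :
    ∫ y in t, ‖x - y‖ ^ (-s) ∂μ ≤
      finrank ℝ E * μ.real (ball 0 1) / (s - finrank ℝ E) *
        infDist x t ^ ((finrank ℝ E : ℝ) - s) := by
  have hint := (integrable_indicator_rpow_neg_norm μ hs hx).comp_sub_right x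
  calc ∫ y in t, ‖x - y‖ ^ (-s) ∂μ
      = ∫ y in t, (Ici (infDist x t)).indicator (· ^ (-s)) ‖y - x‖ ∂μ :=
        setIntegral_congr_fun ht (eqOn_rpow_neg_norm_sub_indicator s x)
    _ ≤ ∫ y, (Ici (infDist x t)).indicator (· ^ (-s)) ‖y - x‖ ∂μ :=
        setIntegral_le_integral hint (.of_forall fun y ↦
          indicator_nonneg (fun r (hr : r ∈ Ici _) ↦ Real.rpow_nonneg (hx.le.trans hr) _) _)
    _ = _ := by
        rw [integral_sub_right_eq_self (fun y ↦ (Ici (infDist x t)).indicator (· ^ (-s)) ‖y‖),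
          integral_indicator_rpow_neg_norm μ hs hx]

theorem exists_abs_setIntegral_rpow_neg_norm_sub_sub_le (hs : (finrank ℝ E : ℝ) < s)
    {t : Set E} (ht : MeasurableSet t) :
    ∃ C > 0, ∀ x₁ x₂, 0 < infDist x₁ t → 0 < infDist x₂ t →
      |∫ y in t, ‖x₁ - y‖ ^ (-s) ∂μ - ∫ y in t, ‖x₂ - y‖ ^ (-s) ∂μ| ≤
        C * (infDist x₁ t ^ ((finrank ℝ E : ℝ) - (s + 1)) +
          infDist x₂ t ^ ((finrank ℝ E : ℝ) - (s + 1))) * ‖x₁ - x₂‖ := by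
  set n : ℝ := (finrank ℝ E : ℝ)
  set κ := n * μ.real (ball 0 1) / (s + 1 - n)
  have hn : 0 < n := Nat.cast_pos.2 finrank_pos
  have hκ : 0 < κ := by
    refine div_pos (mul_pos hn ?_) (by linarith)
    exact ENNReal.toReal_pos (measure_ball_pos μ 0 one_pos).ne' measure_ball_lt_top.ne
  have hs0 : 0 ≤ s := (hn.trans hs).le
  refine ⟨s * κ, mul_pos (hn.trans hs) hκ, fun x₁ x₂ hx₁ hx₂ ↦ ?_⟩
  have hpos : ∀ x, 0 < infDist x t → ∀ y ∈ t, 0 < ‖x - y‖ := fun x hx y hy ↦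
    (hx.trans_le (infDist_le_dist_of_mem hy)).trans_eq (dist_eq_norm x y)
  have hs' : n < s + 1 := by linarith
  have hint := fun x (hx : 0 < infDist x t) ↦ integrableOn_rpow_neg_norm_sub μ hs ht hx
  have hint' := fun x (hx : 0 < infDist x t) ↦ integrableOn_rpow_neg_norm_sub μ hs' ht hx
  have hbound := fun x (hx : 0 < infDist x t) ↦ setIntegral_rpow_neg_norm_sub_le μ hs' ht hx
  calc |∫ y in t, ‖x₁ - y‖ ^ (-s) ∂μ - ∫ y in t, ‖x₂ - y‖ ^ (-s) ∂μ|
      = |∫ y in t, (‖x₁ - y‖ ^ (-s) - ‖x₂ - y‖ ^ (-s)) ∂μ| := by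
        rw [integral_sub (hint x₁ hx₁) (hint x₂ hx₂)]
    _ ≤ ∫ y in t, |‖x₁ - y‖ ^ (-s) - ‖x₂ - y‖ ^ (-s)| ∂μ :=
        abs_integral_le_integral_abs
    _ ≤ ∫ y in t, s * ‖x₁ - x₂‖ * (‖x₁ - y‖ ^ (-(s + 1)) + ‖x₂ - y‖ ^ (-(s + 1))) ∂μ :=
        setIntegral_mono_on ((hint x₁ hx₁).sub (hint x₂ hx₂)).abs
          (((hint' x₁ hx₁).add (hint' x₂ hx₂)).const_mul _) ht fun y hy ↦
            abs_rpow_neg_norm_sub_sub_le hs0 (hpos x₁ hx₁ y hy) (hpos x₂ hx₂ y hy)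
    _ = s * ‖x₁ - x₂‖ *
          (∫ y in t, ‖x₁ - y‖ ^ (-(s + 1)) ∂μ + ∫ y in t, ‖x₂ - y‖ ^ (-(s + 1)) ∂μ) := by
        rw [integral_const_mul, integral_add (hint' x₁ hx₁) (hint' x₂ hx₂)]
    _ ≤ s * ‖x₁ - x₂‖ *
          (κ * infDist x₁ t ^ (n - (s + 1)) + κ * infDist x₂ t ^ (n - (s + 1))) :=
        mul_le_mul_of_nonneg_left (add_le_add (hbound x₁ hx₁) (hbound x₂ hx₂))
          (mul_nonneg hs0 (norm_nonneg _))
    _ = s * κ * (infDist x₁ t ^ (n - (s + 1)) + infDist x₂ t ^ (n - (s + 1))) * ‖x₁ - x₂‖ := by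
        ring

end RadialTail

theorem statement16_general
    (N : ℕ) (hN : 2 ≤ N) (Ω : Set (EuclideanSpace ℝ (Fin N)))
    (hΩo : IsOpen Ω) (hΩb : Bornology.IsBounded Ω)
    (α : ℝ) (hα1 : 0 < α) :
    (∃ C : ℝ, 0 < C ∧
      ∀ x₁ ∈ Ω, ∀ x₂ ∈ Ω,
        |(∫ y in Ωᶜ, ‖x₁ - y‖ ^ (-((N : ℝ) + 2 * α))) -
            ∫ y in Ωᶜ, ‖x₂ - y‖ ^ (-((N : ℝ) + 2 * α))| ≤
          C * (bdist Ω x₁ ^ (-1 - 2 * α) + bdist Ω x₂ ^ (-1 - 2 * α)) * ‖x₁ - x₂‖) ∧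
    ∀ x ∈ Ω, ∃ r > 0, Metric.ball x r ⊆ Ω ∧ ∃ K : NNReal,
      LipschitzOnWith K
        (fun z : EuclideanSpace ℝ (Fin N) => ∫ y in Ωᶜ, ‖z - y‖ ^ (-((N : ℝ) + 2 * α)))
        (Metric.ball x r) := by
  have : Nontrivial (EuclideanSpace ℝ (Fin N)) :=
    Module.nontrivial_of_finrank_pos (R := ℝ) (by rw [finrank_euclideanSpace_fin]; omega)
  have hρ : ∀ x ∈ Ω, 0 < infDist x Ωᶜ := fun x hx ↦
    (hΩo.isClosed_compl.notMem_iff_infDist_pos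
      (nonempty_compl.2 fun h ↦ NormedSpace.unbounded_univ ℝ _ (h ▸ hΩb))).1 (by simpa)
  obtain ⟨C, hC, hφ⟩ := exists_abs_setIntegral_rpow_neg_norm_sub_sub_le volume
    (s := N + 2 * α) (by simp [hα1]) hΩo.isClosed_compl.measurableSet
  rw [finrank_euclideanSpace_fin, show (N : ℝ) - (N + 2 * α + 1) = -1 - 2 * α by ring] at hφ
  refine ⟨⟨C, hC, fun x₁ hx₁ x₂ hx₂ ↦ hφ x₁ x₂ (hρ x₁ hx₁) (hρ x₂ hx₂)⟩, fun x hx ↦ ?_⟩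
  simpa using exists_ball_lipschitzOnWith_of_abs_sub_le hC.le (by linarith) hφ (hρ x hx)

/-- Lemma 2.1, Lipschitz estimate: for
`φ(x) = ∫_{ℝ^N \ Ω} |x-y|^{-(N+2α)} dy` there is `C > 0` with
`|φ(x₁) - φ(x₂)| ≤ C (ρ(x₁)^{-1-2α} + ρ(x₂)^{-1-2α}) |x₁ - x₂|` for all `x₁, x₂ ∈ Ω`;
in particular `φ` is locally Lipschitz in `Ω`. -/
theorem statement16
    (N : ℕ) (hN : 2 ≤ N) (Ω : Set (EuclideanSpace ℝ (Fin N)))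
    (hΩo : IsOpen Ω) (hΩb : Bornology.IsBounded Ω) (hΩconn : IsConnected Ω)
    (hΩbd : HasC2Boundary Ω)
    (α : ℝ) (hα1 : 0 < α) (hα2 : α < 1) :
    (∃ C : ℝ, 0 < C ∧
      ∀ x₁ ∈ Ω, ∀ x₂ ∈ Ω,
        |(∫ y in Ωᶜ, ‖x₁ - y‖ ^ (-((N : ℝ) + 2 * α))) -
            ∫ y in Ωᶜ, ‖x₂ - y‖ ^ (-((N : ℝ) + 2 * α))| ≤
          C * (bdist Ω x₁ ^ (-1 - 2 * α) + bdist Ω x₂ ^ (-1 - 2 * α)) * ‖x₁ - x₂‖) ∧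
    ∀ x ∈ Ω, ∃ r > 0, Metric.ball x r ⊆ Ω ∧ ∃ K : NNReal,
      LipschitzOnWith K
        (fun z : EuclideanSpace ℝ (Fin N) => ∫ y in Ωᶜ, ‖z - y‖ ^ (-((N : ℝ) + 2 * α)))
        (Metric.ball x r) :=
  statement16_general N hN Ω hΩo hΩb α hα1
end
end

section
/- Let Ω ⊂ ℝ^N (N ≥ 2) be a bounded open domain with C² boundary, α ∈ (1/2, 1), and let G : Ω × Ω → [0, ∞] be a measurable kernel satisfying G(x,y) ≤ c₂₈ min{ |x-y|^{-(N-2α)}, ρ(x)^{2α-1} ρ(y)^{2α-1} |x-y|^{-(N-2+2α)} } for all x ≠ y in Ω, for some c₂₈ > 0. Then for every bounded measurable g : Ω → ℝ and every x ∈ Ω, |∫_Ω G(x,y) g(y) dy| ≤ c₂₉ ‖g‖_{L^∞(Ω)} ρ(x)^{2α-1}, where c₂₉ > 0 depends only on Ω, α, and c₂₈; in particular sup_{x∈Ω} ∫_Ω ρ(y)^{2α-1}/|x-y|^{N-2+2α} dy < ∞. -/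
open MeasureTheory Metric Set Filter Topology

noncomputable section

variable {N : ℕ}

/-
Because `Ω` is bounded, `ρ ≤ diam Ω + 1`, so the second branch of the minimum alone gives
`G(x,y) |g(y)| ≤ c₂₈ K ρ(x)^{2α-1} (diam Ω + 1)^{2α-1} |x-y|^{-(N-2+2α)}` on `Ω`.
As `N - 2 + 2α < N`, the Riesz kernel `|x-y|^{-(N-2+2α)}` is integrable on the ball of radius
`diam Ω + 1` about `x`, which contains `Ω`, and by translation invariance its integral there does
not depend on `x`.
-/

lemma preimage_sub_right_ball_zero {E : Type*} [SeminormedAddCommGroup E] (x : E) (r : ℝ) :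
    (· - x) ⁻¹' ball (0 : E) r = ball x r := by
  ext y
  simp [dist_eq_norm]

section RieszKernel

variable {E : Type*} [NormedAddCommGroup E] [MeasurableSpace E] [BorelSpace E] {μ : Measure E}
  {σ : ℝ}

lemma setIntegral_ball_norm_sub_rpow_neg [μ.IsAddRightInvariant] (x : E) (r : ℝ) :
    ∫ y in ball x r, ‖x - y‖ ^ (-σ) ∂μ = ∫ z in ball 0 r, ‖z‖ ^ (-σ) ∂μ := by
  simp_rw [norm_sub_rev x, ← preimage_sub_right_ball_zero x r]
  exact (measurePreserving_sub_right μ x).setIntegral_preimage_emb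
    (measurableEmbedding_subRight x) (fun z => ‖z‖ ^ (-σ)) _

variable [NormedSpace ℝ E] [FiniteDimensional ℝ E] [μ.IsAddHaarMeasure]

lemma integrableOn_ball_norm_sub_rpow_neg (hd : 1 ≤ Module.finrank ℝ E)
    (hσ : σ < Module.finrank ℝ E) (x : E) (r : ℝ) :
    IntegrableOn (fun y => ‖x - y‖ ^ (-σ)) (ball x r) μ := by
  have hcentered : IntegrableOn (fun z : E => ‖z‖ ^ (-σ)) (ball 0 r) μ :=
    integrableOn_ball_of_norm_le_rpow (C := 1) hd hσ
      (Filter.Eventually.of_forall fun z => by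
        rw [one_mul, Real.norm_of_nonneg (by positivity)])
      (measurable_norm.pow_const _).aestronglyMeasurable
  rw [← (measurePreserving_sub_right μ x).integrableOn_comp_preimage
    (measurableEmbedding_subRight x), preimage_sub_right_ball_zero] at hcentered
  simpa only [Function.comp_def, norm_sub_rev] using hcentered

lemma integrableOn_and_abs_setIntegral_le_of_abs_le_mul_rpow (hd : 1 ≤ Module.finrank ℝ E)
    (hσ : σ < Module.finrank ℝ E) {Ω : Set E} {x : E} {r M : ℝ} {f : E → ℝ}
    (hΩ : Ω ⊆ ball x r) (hM : 0 ≤ M) (hf : AEStronglyMeasurable f (μ.restrict Ω))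
    (hbound : ∀ᵐ y ∂μ.restrict Ω, |f y| ≤ M * ‖x - y‖ ^ (-σ)) :
    IntegrableOn f Ω μ ∧ |∫ y in Ω, f y ∂μ| ≤ M * ∫ z in ball 0 r, ‖z‖ ^ (-σ) ∂μ := by
  have hball : IntegrableOn (fun y => M * ‖x - y‖ ^ (-σ)) (ball x r) μ :=
    (integrableOn_ball_norm_sub_rpow_neg hd hσ x r).const_mul M
  have hfΩ : IntegrableOn f Ω μ := (hball.mono_set hΩ).mono' hf hbound
  refine ⟨hfΩ, ?_⟩
  calc |∫ y in Ω, f y ∂μ| ≤ ∫ y in Ω, M * ‖x - y‖ ^ (-σ) ∂μ :=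
        norm_integral_le_of_norm_le (f := f) (hball.mono_set hΩ) hbound
    _ ≤ ∫ y in ball x r, M * ‖x - y‖ ^ (-σ) ∂μ :=
        setIntegral_mono_set hball (Filter.Eventually.of_forall fun _ => by positivity)
          hΩ.eventuallyLE
    _ = M * ∫ z in ball 0 r, ‖z‖ ^ (-σ) ∂μ := by
        rw [integral_const_mul, setIntegral_ball_norm_sub_rpow_neg]

end RieszKernel

lemma infDist_compl_le_diam_add_one {E : Type*} [NormedAddCommGroup E] [NormedSpace ℝ E]
    [Nontrivial E] {Ω : Set E} (hΩ : Bornology.IsBounded Ω) (x : E) :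
    infDist x Ωᶜ ≤ diam Ω + 1 := by
  by_cases hx : x ∈ Ω
  · obtain ⟨v, hv⟩ := exists_norm_eq E (by positivity : 0 ≤ diam Ω + 1)
    have hxv : x + v ∈ Ωᶜ := fun hxv => by
      have := dist_le_diam_of_mem hΩ hxv hx
      rw [dist_eq_norm, add_sub_cancel_left, hv] at this
      linarith
    calc infDist x Ωᶜ ≤ dist x (x + v) := infDist_le_dist_of_mem hxv
      _ = diam Ω + 1 := by rw [dist_comm, dist_eq_norm, add_sub_cancel_left, hv]
  · rw [infDist_zero_of_mem hx]
    positivity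

lemma infDist_compl_rpow_le {E : Type*} [NormedAddCommGroup E] [NormedSpace ℝ E]
    [Nontrivial E] {Ω : Set E} (hΩ : Bornology.IsBounded Ω) {β : ℝ} (hβ : 0 ≤ β) (y : E) :
    infDist y Ωᶜ ^ β ≤ (diam Ω + 1) ^ β :=
  Real.rpow_le_rpow infDist_nonneg (infDist_compl_le_diam_add_one hΩ y) hβ

lemma subset_ball_diam_add_one {E : Type*} [PseudoMetricSpace E] {Ω : Set E}
    (hΩ : Bornology.IsBounded Ω) {x : E} (hx : x ∈ Ω) : Ω ⊆ ball x (diam Ω + 1) := fun _ hy =>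
  mem_ball.2 ((dist_le_diam_of_mem hΩ hy hx).trans_lt (lt_add_one _))

section BoundaryWeightedRiesz

variable {E : Type*} [NormedAddCommGroup E] [NormedSpace ℝ E] [FiniteDimensional ℝ E]
  [Nontrivial E] [MeasurableSpace E] [BorelSpace E] {μ : Measure E} [μ.IsAddHaarMeasure]
  {Ω : Set E} {β σ : ℝ}

lemma integrableOn_and_setIntegral_infDist_rpow_mul_le (hσ : σ < Module.finrank ℝ E)
    (hΩ : Bornology.IsBounded Ω) (hβ : 0 ≤ β) {x : E} (hx : x ∈ Ω) :
    IntegrableOn (fun y => infDist y Ωᶜ ^ β * ‖x - y‖ ^ (-σ)) Ω μ ∧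
      ∫ y in Ω, infDist y Ωᶜ ^ β * ‖x - y‖ ^ (-σ) ∂μ ≤
        (diam Ω + 1) ^ β * ∫ z in ball 0 (diam Ω + 1), ‖z‖ ^ (-σ) ∂μ := by
  have hbound : ∀ y, |infDist y Ωᶜ ^ β * ‖x - y‖ ^ (-σ)| ≤ (diam Ω + 1) ^ β * ‖x - y‖ ^ (-σ) :=
    fun y => by
      rw [abs_of_nonneg (mul_nonneg (Real.rpow_nonneg infDist_nonneg _) (by positivity))]
      exact mul_le_mul_of_nonneg_right (infDist_compl_rpow_le hΩ hβ y) (by positivity)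
  obtain ⟨hint, hle⟩ := integrableOn_and_abs_setIntegral_le_of_abs_le_mul_rpow (μ := μ)
    Module.finrank_pos hσ (subset_ball_diam_add_one hΩ hx) (by positivity)
    (((continuous_infDist_pt _).measurable.pow_const _).mul (by fun_prop)).aestronglyMeasurable
    (Filter.Eventually.of_forall hbound)
  exact ⟨hint, (le_abs_self _).trans hle⟩

lemma integrableOn_and_abs_setIntegral_mul_le_of_le_infDist_rpow
    (hσ : σ < Module.finrank ℝ E) (hΩm : MeasurableSet Ω) (hΩ : Bornology.IsBounded Ω)
    (hβ : 0 ≤ β) {x : E} (hx : x ∈ Ω) {a c K : ℝ} (ha : 0 ≤ a) (hc : 0 ≤ c) {k g : E → ℝ}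
    (hkm : Measurable k) (hk0 : ∀ y, 0 ≤ k y)
    (hk : ∀ y ∈ Ω, y ≠ x → k y ≤ c * (a * infDist y Ωᶜ ^ β * ‖x - y‖ ^ (-σ)))
    (hgm : Measurable g) (hg : ∀ y ∈ Ω, |g y| ≤ K) :
    IntegrableOn (fun y => k y * g y) Ω μ ∧
      |∫ y in Ω, k y * g y ∂μ| ≤
        c * a * K * (diam Ω + 1) ^ β * ∫ z in ball 0 (diam Ω + 1), ‖z‖ ^ (-σ) ∂μ := by
  have hK : 0 ≤ K := (abs_nonneg _).trans (hg x hx)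
  have hbound : ∀ᵐ y ∂μ.restrict Ω,
      |k y * g y| ≤ c * a * K * (diam Ω + 1) ^ β * ‖x - y‖ ^ (-σ) := by
    filter_upwards [ae_restrict_mem hΩm,
      ae_restrict_of_ae (measure_eq_zero_iff_ae_notMem.1 (measure_singleton x))] with y hy hyx
    have hρ0 : 0 ≤ infDist y Ωᶜ ^ β := Real.rpow_nonneg infDist_nonneg _
    calc |k y * g y| = k y * |g y| := by rw [abs_mul, abs_of_nonneg (hk0 y)]
      _ ≤ c * (a * infDist y Ωᶜ ^ β * ‖x - y‖ ^ (-σ)) * K :=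
        mul_le_mul (hk y hy hyx) (hg y hy) (abs_nonneg _) (by positivity)
      _ ≤ c * (a * (diam Ω + 1) ^ β * ‖x - y‖ ^ (-σ)) * K := by
        gcongr c * (a * ?_ * _) * K
        exact infDist_compl_rpow_le hΩ hβ y
      _ = c * a * K * (diam Ω + 1) ^ β * ‖x - y‖ ^ (-σ) := by ring
  exact integrableOn_and_abs_setIntegral_le_of_abs_le_mul_rpow Module.finrank_pos hσ
    (subset_ball_diam_add_one hΩ hx) (by positivity) (hkm.mul hgm).aestronglyMeasurable hbound

end BoundaryWeightedRiesz

theorem statement18_general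
    (N : ℕ) (hN : 2 ≤ N) (Ω : Set (EuclideanSpace ℝ (Fin N)))
    (hΩo : IsOpen Ω) (hΩb : Bornology.IsBounded Ω)
    (α : ℝ) (hα1 : 1 / 2 < α) (hα2 : α < 1)
    (c₂₈ : ℝ) (hc₂₈ : 0 < c₂₈)
    (G : EuclideanSpace ℝ (Fin N) → EuclideanSpace ℝ (Fin N) → ℝ)
    (hGm : Measurable (Function.uncurry G)) (hGnn : ∀ x y, 0 ≤ G x y)
    (hGbd : ∀ x ∈ Ω, ∀ y ∈ Ω, x ≠ y →
      G x y ≤ c₂₈ * min (‖x - y‖ ^ (-((N : ℝ) - 2 * α)))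
        (bdist Ω x ^ (2 * α - 1) * bdist Ω y ^ (2 * α - 1) *
          ‖x - y‖ ^ (-((N : ℝ) - 2 + 2 * α)))) :
    (∃ c₂₉ : ℝ, 0 < c₂₉ ∧
      ∀ g : EuclideanSpace ℝ (Fin N) → ℝ, Measurable g →
        ∀ K : ℝ, (∀ y ∈ Ω, |g y| ≤ K) →
          ∀ x ∈ Ω,
            IntegrableOn (fun y => G x y * g y) Ω volume ∧
            |∫ y in Ω, G x y * g y| ≤ c₂₉ * K * bdist Ω x ^ (2 * α - 1)) ∧
    ∃ C : ℝ, ∀ x ∈ Ω,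
      IntegrableOn
        (fun y => bdist Ω y ^ (2 * α - 1) * ‖x - y‖ ^ (-((N : ℝ) - 2 + 2 * α))) Ω volume ∧
      (∫ y in Ω, bdist Ω y ^ (2 * α - 1) * ‖x - y‖ ^ (-((N : ℝ) - 2 + 2 * α))) ≤ C := by
  have hdim : Module.finrank ℝ (EuclideanSpace ℝ (Fin N)) = N := finrank_euclideanSpace_fin
  have : Nontrivial (EuclideanSpace ℝ (Fin N)) :=
    Module.nontrivial_of_finrank_pos (R := ℝ) (by omega)
  have hσ : (N : ℝ) - 2 + 2 * α < Module.finrank ℝ (EuclideanSpace ℝ (Fin N)) := by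
    rw [hdim]; linarith
  have hβ : 0 ≤ 2 * α - 1 := by linarith
  set B := (diam Ω + 1) ^ (2 * α - 1)
  set I := ∫ z in ball (0 : EuclideanSpace ℝ (Fin N)) (diam Ω + 1),
    ‖z‖ ^ (-((N : ℝ) - 2 + 2 * α))
  refine ⟨⟨c₂₈ * B * I + 1, by positivity, fun g hg K hK x hx => ?_⟩, B * I, fun x hx =>
    integrableOn_and_setIntegral_infDist_rpow_mul_le (μ := volume) hσ hΩb hβ hx⟩
  have hρx : 0 ≤ bdist Ω x ^ (2 * α - 1) := Real.rpow_nonneg infDist_nonneg _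
  obtain ⟨hint, hle⟩ := integrableOn_and_abs_setIntegral_mul_le_of_le_infDist_rpow (μ := volume)
    hσ hΩo.measurableSet hΩb hβ hx hρx hc₂₈.le (hGm.comp measurable_prodMk_left) (hGnn x)
    (fun y hy hyx => (hGbd x hx y hy hyx.symm).trans
      (mul_le_mul_of_nonneg_left (min_le_right _ _) hc₂₈.le)) hg hK
  refine ⟨hint, hle.trans ?_⟩
  nlinarith [mul_nonneg ((abs_nonneg _).trans (hK x hx)) hρx]

/-- Green-kernel estimate: if a nonnegative measurable kernel `G` on `Ω × Ω`
satisfies `G(x,y) ≤ c₂₈ min{|x-y|^{-(N-2α)}, ρ(x)^{2α-1} ρ(y)^{2α-1} |x-y|^{-(N-2+2α)}}`, then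
`|∫_Ω G(x,y) g(y) dy| ≤ c₂₉ ‖g‖_{L^∞(Ω)} ρ(x)^{2α-1}` for every bounded measurable `g`; in
particular `sup_{x ∈ Ω} ∫_Ω ρ(y)^{2α-1} |x-y|^{-(N-2+2α)} dy < ∞`. -/
theorem statement18
    (N : ℕ) (hN : 2 ≤ N) (Ω : Set (EuclideanSpace ℝ (Fin N)))
    (hΩo : IsOpen Ω) (hΩb : Bornology.IsBounded Ω) (hΩconn : IsConnected Ω)
    (hΩbd : HasC2Boundary Ω)
    (α : ℝ) (hα1 : 1 / 2 < α) (hα2 : α < 1)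
    (c₂₈ : ℝ) (hc₂₈ : 0 < c₂₈)
    (G : EuclideanSpace ℝ (Fin N) → EuclideanSpace ℝ (Fin N) → ℝ)
    (hGm : Measurable (Function.uncurry G)) (hGnn : ∀ x y, 0 ≤ G x y)
    (hGbd : ∀ x ∈ Ω, ∀ y ∈ Ω, x ≠ y →
      G x y ≤ c₂₈ * min (‖x - y‖ ^ (-((N : ℝ) - 2 * α)))
        (bdist Ω x ^ (2 * α - 1) * bdist Ω y ^ (2 * α - 1) *
          ‖x - y‖ ^ (-((N : ℝ) - 2 + 2 * α)))) :
    (∃ c₂₉ : ℝ, 0 < c₂₉ ∧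
      ∀ g : EuclideanSpace ℝ (Fin N) → ℝ, Measurable g →
        ∀ K : ℝ, (∀ y ∈ Ω, |g y| ≤ K) →
          ∀ x ∈ Ω,
            IntegrableOn (fun y => G x y * g y) Ω volume ∧
            |∫ y in Ω, G x y * g y| ≤ c₂₉ * K * bdist Ω x ^ (2 * α - 1)) ∧
    ∃ C : ℝ, ∀ x ∈ Ω,
      IntegrableOn
        (fun y => bdist Ω y ^ (2 * α - 1) * ‖x - y‖ ^ (-((N : ℝ) - 2 + 2 * α))) Ω volume ∧
      (∫ y in Ω, bdist Ω y ^ (2 * α - 1) * ‖x - y‖ ^ (-((N : ℝ) - 2 + 2 * α))) ≤ C :=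
  statement18_general N hN Ω hΩo hΩb α hα1 hα2 c₂₈ hc₂₈ G hGm hGnn hGbd
end
end

section
/- Let Ω ⊂ ℝ^N (N ≥ 2) be a bounded open domain with C² boundary, α ∈ (0,1), and ρ(x) = dist(x, ℝ^N \ Ω). Then there exists c₁₄ > 0, independent of x₁ and x₂, such that for all x₁, x₂ ∈ Ω, ∫_{ℝ^N \ Ω} 1/(|z - x₁| · |z - x₂|^{N+2α}) dz ≤ c₁₄ (ρ(x₁)^{-1-2α} + ρ(x₂)^{-1-2α}). -/
open MeasureTheory Metric Set Filter Topology
open scoped Pointwise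

noncomputable section

variable {N : ℕ}

-- pointwise key inequality
lemma key_ineq {a b s : ℝ} (ha : 0 < a) (hb : 0 < b) (hs : 0 ≤ s) :
    1 / (a * b ^ s) ≤ a ^ (-(s + 1)) + b ^ (-(s + 1)) := by
  have hbs : 0 < b ^ s := Real.rpow_pos_of_pos hb s
  rcases le_total a b with h | h
  · have h1 : a ^ (s + 1) ≤ a * b ^ s := by
      calc a ^ (s + 1) = a * a ^ s := by
            rw [Real.rpow_add ha, Real.rpow_one, mul_comm]
        _ ≤ a * b ^ s := by
            exact mul_le_mul_of_nonneg_left (Real.rpow_le_rpow ha.le h hs) ha.le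
    have h2 : 1 / (a * b ^ s) ≤ 1 / a ^ (s + 1) :=
      one_div_le_one_div_of_le (Real.rpow_pos_of_pos ha _) h1
    calc 1 / (a * b ^ s) ≤ 1 / a ^ (s + 1) := h2
      _ = a ^ (-(s + 1)) := by rw [Real.rpow_neg ha.le, one_div]
      _ ≤ a ^ (-(s + 1)) + b ^ (-(s + 1)) :=
          le_add_of_nonneg_right (Real.rpow_nonneg hb.le _)
  · have h1 : b ^ (s + 1) ≤ a * b ^ s := by
      calc b ^ (s + 1) = b * b ^ s := by
            rw [Real.rpow_add hb, Real.rpow_one, mul_comm]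
        _ ≤ a * b ^ s := by
            exact mul_le_mul_of_nonneg_right h hbs.le
    have h2 : 1 / (a * b ^ s) ≤ 1 / b ^ (s + 1) :=
      one_div_le_one_div_of_le (Real.rpow_pos_of_pos hb _) h1
    calc 1 / (a * b ^ s) ≤ 1 / b ^ (s + 1) := h2
      _ = b ^ (-(s + 1)) := by rw [Real.rpow_neg hb.le, one_div]
      _ ≤ a ^ (-(s + 1)) + b ^ (-(s + 1)) :=
          le_add_of_nonneg_left (Real.rpow_nonneg ha.le _)

local notation "E" => EuclideanSpace ℝ (Fin N)

-- integrability of ‖z - x‖^(-p) off a ball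
lemma intOn_aux (p : ℝ) (hp : (N : ℝ) < p) (x : E) {r : ℝ} (hr : 0 < r) :
    IntegrableOn (fun z : E => ‖z - x‖ ^ (-p)) (Metric.ball x r)ᶜ volume := by
  have hp0 : 0 ≤ p := le_trans (Nat.cast_nonneg N) hp.le
  have hint : Integrable (fun z : E => (1 + 1 / r) ^ p * (1 + ‖z - x‖) ^ (-p)) volume := by
    have h1 : Integrable (fun z : E => (1 + ‖z‖) ^ (-p)) volume := by
      apply integrable_one_add_norm
      rwa [finrank_euclideanSpace_fin]
    exact (h1.comp_sub_right x).const_mul _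
  apply Integrable.mono' hint.integrableOn
  · exact Measurable.aestronglyMeasurable (by fun_prop)
  · rw [ae_restrict_iff' measurableSet_ball.compl]
    filter_upwards with z hz
    have hzr : r ≤ ‖z - x‖ := by
      simpa [dist_eq_norm] using hz
    have hz0 : 0 < ‖z - x‖ := lt_of_lt_of_le hr hzr
    rw [Real.norm_eq_abs, abs_of_nonneg (Real.rpow_nonneg (norm_nonneg _) _)]
    have h1 : 1 + ‖z - x‖ ≤ (1 + 1 / r) * ‖z - x‖ := by
      have : 1 ≤ ‖z - x‖ / r := (one_le_div hr).2 hzr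
      have h0 : (1 : ℝ) ≤ 1 / r * ‖z - x‖ := by
        rw [one_div, ← div_eq_inv_mul, le_div_iff₀ hr, one_mul]; exact hzr
      have expand : (1 + 1 / r) * ‖z - x‖ = ‖z - x‖ + 1 / r * ‖z - x‖ := by ring
      rw [expand]; linarith
    have h2 : (1 + ‖z - x‖) ^ p ≤ ((1 + 1 / r) * ‖z - x‖) ^ p :=
      Real.rpow_le_rpow (by positivity) h1 hp0
    have h3 : ((1 + 1 / r) * ‖z - x‖) ^ p = (1 + 1 / r) ^ p * ‖z - x‖ ^ p :=
      Real.mul_rpow (by positivity) (norm_nonneg _)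
    have hA : 0 < (1 + ‖z - x‖) ^ p := Real.rpow_pos_of_pos (by positivity) _
    have hB : 0 < ‖z - x‖ ^ p := Real.rpow_pos_of_pos hz0 _
    rw [Real.rpow_neg (norm_nonneg _), Real.rpow_neg (by positivity : (0:ℝ) ≤ 1 + ‖z - x‖),
      ← div_eq_mul_inv, ← one_div, div_le_div_iff₀ hB hA, one_mul]
    rw [h3] at h2
    linarith

lemma val_aux (p : ℝ) {r : ℝ} (hr : 0 < r) (x : E) :
    ∫ z in (Metric.ball x r)ᶜ, ‖z - x‖ ^ (-p) =
      r ^ ((N : ℝ) - p) * ∫ w in (Metric.ball (0 : E) 1)ᶜ, ‖w‖ ^ (-p) := by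
  have hmp : MeasurePreserving (fun z : E => z - x) volume volume :=
    measurePreserving_sub_right volume x
  have hemb : MeasurableEmbedding (fun z : E => z - x) :=
    (MeasurableEquiv.subRight x).measurableEmbedding
  have hpre : (fun z : E => z - x) ⁻¹' (Metric.ball (0 : E) r)ᶜ = (Metric.ball x r)ᶜ := by
    ext z
    simp [dist_eq_norm]
  have htrans : (∫ z in (Metric.ball x r)ᶜ, ‖z - x‖ ^ (-p)) =
      ∫ w in (Metric.ball (0 : E) r)ᶜ, ‖w‖ ^ (-p) := by
    rw [← hpre]
    exact hmp.setIntegral_preimage_emb hemb (fun w => ‖w‖ ^ (-p)) _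
  have hs : r • ((Metric.ball (0 : E) 1)ᶜ) = (Metric.ball (0 : E) r)ᶜ := by
    ext w
    rw [mem_smul_set_iff_inv_smul_mem₀ hr.ne']
    simp only [mem_compl_iff, mem_ball_zero_iff, not_lt, norm_smul, Real.norm_eq_abs, abs_inv,
      abs_of_pos hr]
    rw [le_inv_mul_iff₀ hr, mul_one]
  have hscale := Measure.setIntegral_comp_smul_of_pos volume (fun w : E => ‖w‖ ^ (-p))
    ((Metric.ball (0 : E) 1)ᶜ) hr
  rw [hs] at hscale
  have hL : (∫ w in (Metric.ball (0 : E) 1)ᶜ, ‖r • w‖ ^ (-p)) =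
      r ^ (-p) * ∫ w in (Metric.ball (0 : E) 1)ᶜ, ‖w‖ ^ (-p) := by
    simp_rw [norm_smul, Real.norm_eq_abs, abs_of_pos hr, Real.mul_rpow hr.le (norm_nonneg _)]
    rw [integral_const_mul]
  rw [hL, smul_eq_mul] at hscale
  have hrN : (0 : ℝ) < r ^ Module.finrank ℝ E := pow_pos hr _
  have hI : (∫ w in (Metric.ball (0 : E) r)ᶜ, ‖w‖ ^ (-p)) =
      r ^ Module.finrank ℝ E * (r ^ (-p) * ∫ w in (Metric.ball (0 : E) 1)ᶜ, ‖w‖ ^ (-p)) := by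
    rw [hscale, ← mul_assoc, mul_inv_cancel₀ hrN.ne', one_mul]
  rw [htrans, hI, finrank_euclideanSpace_fin, sub_eq_add_neg, Real.rpow_add hr,
    Real.rpow_natCast, mul_assoc]

/-- estimate from the proof of Lemma 2.1: there is `c₁₄ > 0`, independent of
`x₁, x₂ ∈ Ω`, such that
`∫_{ℝ^N \ Ω} dz / (|z-x₁| |z-x₂|^{N+2α}) ≤ c₁₄ (ρ(x₁)^{-1-2α} + ρ(x₂)^{-1-2α})`. -/
theorem statement19
    (N : ℕ) (hN : 2 ≤ N) (Ω : Set (EuclideanSpace ℝ (Fin N)))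
    (hΩo : IsOpen Ω) (hΩb : Bornology.IsBounded Ω) (hΩconn : IsConnected Ω)
    (hΩbd : HasC2Boundary Ω)
    (α : ℝ) (hα1 : 0 < α) (hα2 : α < 1) :
    ∃ c₁₄ : ℝ, 0 < c₁₄ ∧
      ∀ x₁ ∈ Ω, ∀ x₂ ∈ Ω,
        IntegrableOn
          (fun z => 1 / (‖z - x₁‖ * ‖z - x₂‖ ^ ((N : ℝ) + 2 * α))) Ωᶜ volume ∧
        (∫ z in Ωᶜ, 1 / (‖z - x₁‖ * ‖z - x₂‖ ^ ((N : ℝ) + 2 * α))) ≤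
          c₁₄ * (bdist Ω x₁ ^ (-1 - 2 * α) + bdist Ω x₂ ^ (-1 - 2 * α)) := by
  classical
  set p : ℝ := (N : ℝ) + 1 + 2 * α with hp_def
  have hNp : (N : ℝ) < p := by rw [hp_def]; linarith
  set C : ℝ := ∫ w in (Metric.ball (0 : EuclideanSpace ℝ (Fin N)) 1)ᶜ, ‖w‖ ^ (-p) with hC_def
  have hC0 : 0 ≤ C :=
    integral_nonneg fun w => Real.rpow_nonneg (norm_nonneg _) _
  refine ⟨C + 1, by linarith, ?_⟩
  intro x₁ hx₁ x₂ hx₂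
  have hne : (Ωᶜ : Set (EuclideanSpace ℝ (Fin N))).Nonempty := by
    rcases eq_empty_or_nonempty (Ωᶜ : Set (EuclideanSpace ℝ (Fin N))) with h | h
    · exfalso
      have hU : Ω = univ := by rwa [compl_empty_iff] at h
      have : Nonempty (Fin N) := ⟨⟨0, by omega⟩⟩
      exact NormedSpace.unbounded_univ ℝ (EuclideanSpace ℝ (Fin N)) (hU ▸ hΩb)
    · exact h
  have hclosed : IsClosed (Ωᶜ : Set (EuclideanSpace ℝ (Fin N))) := hΩo.isClosed_compl
  have hρ : ∀ x ∈ Ω, 0 < bdist Ω x := by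
    intro x hx
    exact (hclosed.notMem_iff_infDist_pos hne).1 (by simpa using hx)
  have hρ₁ := hρ x₁ hx₁
  have hρ₂ := hρ x₂ hx₂
  have hsub : ∀ x ∈ Ω, (Ωᶜ : Set (EuclideanSpace ℝ (Fin N))) ⊆ (Metric.ball x (bdist Ω x))ᶜ := by
    intro x hx z hz
    simp only [mem_compl_iff, Metric.mem_ball, not_lt]
    rw [dist_comm]
    exact Metric.infDist_le_dist_of_mem (x := x) hz
  have hdist : ∀ x ∈ Ω, ∀ z ∈ (Ωᶜ : Set (EuclideanSpace ℝ (Fin N))), bdist Ω x ≤ ‖z - x‖ := by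
    intro x hx z hz
    have := hsub x hx hz
    simp only [mem_compl_iff, Metric.mem_ball, not_lt, dist_eq_norm] at this
    exact this
  have hg : ∀ x ∈ Ω, IntegrableOn (fun z => ‖z - x‖ ^ (-p)) Ωᶜ volume := fun x hx =>
    (intOn_aux p hNp x (hρ x hx)).mono_set (hsub x hx)
  have hg₁ := hg x₁ hx₁
  have hg₂ := hg x₂ hx₂
  have hbound : ∀ z ∈ (Ωᶜ : Set (EuclideanSpace ℝ (Fin N))),
      1 / (‖z - x₁‖ * ‖z - x₂‖ ^ ((N : ℝ) + 2 * α)) ≤ ‖z - x₁‖ ^ (-p) + ‖z - x₂‖ ^ (-p) := by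
    intro z hz
    have h1 : 0 < ‖z - x₁‖ := lt_of_lt_of_le hρ₁ (hdist x₁ hx₁ z hz)
    have h2 : 0 < ‖z - x₂‖ := lt_of_lt_of_le hρ₂ (hdist x₂ hx₂ z hz)
    have hs0 : (0 : ℝ) ≤ (N : ℝ) + 2 * α := by positivity
    have hkey := key_ineq h1 h2 hs0
    have hpe : -((N : ℝ) + 2 * α + 1) = -p := by rw [hp_def]; ring
    rwa [hpe] at hkey
  have hmeasΩc : MeasurableSet (Ωᶜ : Set (EuclideanSpace ℝ (Fin N))) := hclosed.measurableSet
  have hf_int : IntegrableOn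
      (fun z => 1 / (‖z - x₁‖ * ‖z - x₂‖ ^ ((N : ℝ) + 2 * α))) Ωᶜ volume := by
    apply Integrable.mono' (hg₁.add hg₂)
    · exact Measurable.aestronglyMeasurable (by fun_prop)
    · rw [ae_restrict_iff' hmeasΩc]
      filter_upwards with z hz
      rw [Real.norm_eq_abs, abs_of_nonneg (by positivity)]
      exact hbound z hz
  refine ⟨hf_int, ?_⟩
  have step1 : (∫ z in Ωᶜ, 1 / (‖z - x₁‖ * ‖z - x₂‖ ^ ((N : ℝ) + 2 * α))) ≤
      ∫ z in Ωᶜ, (‖z - x₁‖ ^ (-p) + ‖z - x₂‖ ^ (-p)) :=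
    setIntegral_mono_on hf_int (hg₁.add hg₂) hmeasΩc hbound
  have step2 : (∫ z in Ωᶜ, (‖z - x₁‖ ^ (-p) + ‖z - x₂‖ ^ (-p))) =
      (∫ z in Ωᶜ, ‖z - x₁‖ ^ (-p)) + ∫ z in Ωᶜ, ‖z - x₂‖ ^ (-p) :=
    integral_add hg₁ hg₂
  have step3 : ∀ x ∈ Ω, (∫ z in Ωᶜ, ‖z - x‖ ^ (-p)) ≤ bdist Ω x ^ (-1 - 2 * α) * C := by
    intro x hx
    have hmono : (∫ z in Ωᶜ, ‖z - x‖ ^ (-p)) ≤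
        ∫ z in (Metric.ball x (bdist Ω x))ᶜ, ‖z - x‖ ^ (-p) :=
      setIntegral_mono_set (intOn_aux p hNp x (hρ x hx))
        (Filter.Eventually.of_forall fun z => Real.rpow_nonneg (norm_nonneg _) _)
        (HasSubset.Subset.eventuallyLE (hsub x hx))
    have hval := val_aux p (hρ x hx) x
    have hexp : (N : ℝ) - p = -1 - 2 * α := by rw [hp_def]; ring
    rw [hexp] at hval
    rw [hval] at hmono
    exact hmono
  have h₁ := step3 x₁ hx₁
  have h₂ := step3 x₂ hx₂
  have hr1 : 0 ≤ bdist Ω x₁ ^ (-1 - 2 * α) := Real.rpow_nonneg hρ₁.le _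
  have hr2 : 0 ≤ bdist Ω x₂ ^ (-1 - 2 * α) := Real.rpow_nonneg hρ₂.le _
  calc (∫ z in Ωᶜ, 1 / (‖z - x₁‖ * ‖z - x₂‖ ^ ((N : ℝ) + 2 * α)))
      ≤ (∫ z in Ωᶜ, ‖z - x₁‖ ^ (-p)) + ∫ z in Ωᶜ, ‖z - x₂‖ ^ (-p) := by
        rw [← step2]; exact step1
    _ ≤ bdist Ω x₁ ^ (-1 - 2 * α) * C + bdist Ω x₂ ^ (-1 - 2 * α) * C := add_le_add h₁ h₂
    _ ≤ (C + 1) * (bdist Ω x₁ ^ (-1 - 2 * α) + bdist Ω x₂ ^ (-1 - 2 * α)) := by nlinarith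
end
end
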